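/- arXiv:2311.18734 — 3 statements merged into one kernel-verified Lean document; each statement's English description precedes it below -/
import Mathlib

section
/- Let T be a finite tree-with-loop, let (X_n)_{n≥0} be the simple random walk on T started at a vertex v0 (possibly carrying extra independent randomization), with stationary distribution π(v) = deg(v)/Σ_{z} deg(z), and let η be a strong stationary time for (X_n). Let τ be a random time taking values in {1, 2, 3, …}, almost surely finite, and independent of the pair ((X_n)_{n≥0}, η). If P(η < τ) > 0, then for every vertex v of T, P(X_{τ−1} = v | η < τ) = π(v). -/
open MeasureTheory ProbabilityTheory
open scoped ENNReal

/-- A finite tree with a self-loop attached at a distinguished root: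
a finite tree `g` on at least two vertices together with a root. -/
structure TreeWithLoop (S : Type*) [Fintype S] [DecidableEq S] where
  g : SimpleGraph S
  isTree : g.IsTree
  root : S
  card_ge : 2 ≤ Fintype.card S

namespace TreeWithLoop

variable {S : Type*} [Fintype S] [DecidableEq S]

/-- The degree of a vertex: number of tree edges, plus `1` at the root (the loop counts once). -/
noncomputable def deg (T : TreeWithLoop S) (x : S) : ℕ :=
  letI : DecidableRel T.g.Adj := Classical.decRel _
  T.g.degree x + (if x = T.root then 1 else 0)

/-- One-step transition probabilities (as an `ℝ≥0∞`-valued matrix) of the simple random walk: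
`P x y = 1/deg x` for tree edges, `P root root = 1/deg root`, `0` otherwise. -/
noncomputable def stepM (T : TreeWithLoop S) : Matrix S S ℝ≥0∞ :=
  Matrix.of fun x y =>
    letI : DecidableRel T.g.Adj := Classical.decRel _
    if T.g.Adj x y then ((T.deg x : ℝ≥0∞))⁻¹
    else if x = y ∧ x = T.root then ((T.deg T.root : ℝ≥0∞))⁻¹
    else 0

/-- The stationary distribution `π(v) = deg v / Σ_z deg z` of the walk. -/
noncomputable def statDist (T : TreeWithLoop S) (v : S) : ℝ≥0∞ :=
  (T.deg v : ℝ≥0∞) / ∑ z : S, (T.deg z : ℝ≥0∞)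

lemma deg_pos (T : TreeWithLoop S) (x : S) : 0 < T.deg x := by
  classical
  unfold deg
  by_cases hx : x = T.root
  · simp [hx]
  · have : ∃ w, T.g.Adj x w := by
      obtain ⟨y, hy⟩ := Fintype.exists_ne_of_one_lt_card (by have := T.card_ge; omega) x
      obtain ⟨w⟩ := (T.isTree.isConnected.preconnected x y : T.g.Reachable x y)
      cases w with
      | nil => exact absurd rfl hy.symm
      | cons h _ => exact ⟨_, h⟩
    have := (T.g.degree_pos_iff_exists_adj x).2 this
    omega

lemma deg_ne_zero (T : TreeWithLoop S) (x : S) : ((T.deg x : ℝ≥0∞)) ≠ 0 := by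
  exact_mod_cast (T.deg_pos x).ne'

lemma sum_deg_mul_step (T : TreeWithLoop S) (v : S) :
    ∑ w : S, (T.deg w : ℝ≥0∞) * T.stepM w v = (T.deg v : ℝ≥0∞) := by
  classical
  have key : ∀ w : S, (T.deg w : ℝ≥0∞) * T.stepM w v
      = (if T.g.Adj v w then 1 else 0)
        + (if w = v then (if v = T.root then (1 : ℝ≥0∞) else 0) else 0) := by
    intro w
    simp only [stepM, Matrix.of_apply]
    by_cases h : T.g.Adj w v
    · rw [if_pos h, if_pos (T.g.adj_symm h), if_neg (fun hwv => T.g.irrefl (hwv ▸ h)),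
        ENNReal.mul_inv_cancel (T.deg_ne_zero w) (ENNReal.natCast_ne_top _), add_zero]
    · rw [if_neg h, if_neg (fun hvw => h (T.g.adj_symm hvw)), zero_add]
      by_cases h2 : w = v ∧ w = T.root
      · obtain ⟨rfl, h2⟩ := h2
        rw [if_pos ⟨rfl, h2⟩, if_pos rfl, if_pos h2, ← h2,
          ENNReal.mul_inv_cancel (T.deg_ne_zero w) (ENNReal.natCast_ne_top _)]
      · rw [if_neg h2, mul_zero]
        by_cases hwv : w = v
        · subst hwv
          rw [if_pos rfl, if_neg (fun hr => h2 ⟨rfl, hr⟩)]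
        · rw [if_neg hwv]
  rw [Finset.sum_congr rfl (fun w _ => key w), Finset.sum_add_distrib,
    Finset.sum_ite_eq' Finset.univ v (fun _ => if v = T.root then (1:ℝ≥0∞) else 0),
    if_pos (Finset.mem_univ v)]
  have h1 : ∑ w : S, (if T.g.Adj v w then (1:ℝ≥0∞) else 0) = (T.g.degree v : ℝ≥0∞) := by
    rw [Finset.sum_boole]
    congr 1
    rw [SimpleGraph.degree, SimpleGraph.neighborFinset_eq_filter]
  rw [h1]
  simp only [deg]
  push_cast
  by_cases hv : v = T.root <;> simp [hv]

lemma sum_statDist_mul_step (T : TreeWithLoop S) (v : S) :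
    ∑ w : S, T.statDist w * T.stepM w v = T.statDist v := by
  classical
  simp only [statDist, div_eq_mul_inv]
  calc ∑ w : S, (T.deg w : ℝ≥0∞) * (∑ z : S, (T.deg z : ℝ≥0∞))⁻¹ * T.stepM w v
      = (∑ w : S, (T.deg w : ℝ≥0∞) * T.stepM w v) * (∑ z : S, (T.deg z : ℝ≥0∞))⁻¹ := by
        rw [Finset.sum_mul]; exact Finset.sum_congr rfl (fun w _ => by ring)
    _ = (T.deg v : ℝ≥0∞) * (∑ z : S, (T.deg z : ℝ≥0∞))⁻¹ := by rw [T.sum_deg_mul_step v]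

lemma sum_statDist_mul_pow (T : TreeWithLoop S) (j : ℕ) (v : S) :
    ∑ w : S, T.statDist w * (T.stepM ^ j) w v = T.statDist v := by
  classical
  induction j generalizing v with
  | zero => simp [Matrix.one_apply]
  | succ n ih =>
    have : ∀ w : S, (T.stepM ^ (n+1)) w v = ∑ u : S, (T.stepM ^ n) w u * T.stepM u v := by
      intro w; rw [pow_succ, Matrix.mul_apply]
    calc ∑ w : S, T.statDist w * (T.stepM ^ (n+1)) w v
        = ∑ u : S, (∑ w : S, T.statDist w * (T.stepM ^ n) w u) * T.stepM u v := by
          simp_rw [this, Finset.mul_sum, Finset.sum_mul]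
          rw [Finset.sum_comm]
          exact Finset.sum_congr rfl fun u _ => Finset.sum_congr rfl fun w _ => by ring
      _ = ∑ u : S, T.statDist u * T.stepM u v := by
          exact Finset.sum_congr rfl fun u _ => by rw [ih u]
      _ = T.statDist v := T.sum_statDist_mul_step v

end TreeWithLoop

/-- **Remaining stationary after a random number of steps.**
Let `(X_n)` be the simple random walk on a finite tree-with-loop `T` started at `v0` (possibly
carrying extra independent randomization), and let `η` be a strong stationary time for it.
Let `τ` be a random time with values in `{1, 2, …}`, (almost surely finite since `ℕ`-valued),
independent of the pair `((X_n), η)`.  If `P(η < τ) > 0`, then for every vertex `v`,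
`P(X_{τ-1} = v ∣ η < τ) = π(v)`.

The walk is encoded by: `X 0 = v0` a.s., the Markov property `hMarkov` (conditionally on any
trajectory prefix, the next state has law given by `T.stepM`), the strong stationary property
`hSS` (`P(X_η = y, η = k) = π(y)·P(η = k)`), and the strong Markov property at `η` (`hSM`). -/
theorem remain_stationary_after_random_time
    {S : Type*} [Fintype S] [DecidableEq S] [MeasurableSpace S] [MeasurableSingletonClass S]
    {Ω : Type*} [MeasurableSpace Ω] (μ : Measure Ω) [IsProbabilityMeasure μ]
    (T : TreeWithLoop S) (v0 : S)
    (X : ℕ → Ω → S) (hXmeas : ∀ n, Measurable (X n))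
    (η : Ω → ℕ) (hηmeas : Measurable η)
    (hX0 : μ {ω | X 0 ω = v0} = 1)
    (hMarkov : ∀ (n : ℕ) (path : Fin (n + 1) → S) (y : S),
      μ {ω | (∀ i : Fin (n + 1), X i.1 ω = path i) ∧ X (n + 1) ω = y}
        = T.stepM (path (Fin.last n)) y * μ {ω | ∀ i : Fin (n + 1), X i.1 ω = path i})
    (hSS : ∀ (k : ℕ) (y : S),
      μ {ω | X (η ω) ω = y ∧ η ω = k} = T.statDist y * μ {ω | η ω = k})
    (hSM : ∀ (k j : ℕ) (w y : S),
      μ {ω | X (k + j) ω = y ∧ X k ω = w ∧ η ω = k}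
        = (T.stepM ^ j) w y * μ {ω | X k ω = w ∧ η ω = k})
    (τ : Ω → ℕ) (hτmeas : Measurable τ) (hτpos : ∀ ω, 0 < τ ω)
    (hindep : IndepFun (fun ω => ((fun n => X n ω), η ω)) τ μ)
    (hpos : μ {ω | η ω < τ ω} ≠ 0)
    (v : S) :
    μ[|{ω | η ω < τ ω}] {ω | X (τ ω - 1) ω = v} = T.statDist v := by
  classical
  -- measurability helpers
  have hηk : ∀ k : ℕ, MeasurableSet {ω | η ω = k} := fun k =>
    hηmeas (measurableSet_singleton k)
  have hXnv : ∀ (n : ℕ) (w : S), MeasurableSet {ω | X n ω = w} := fun n w =>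
    hXmeas n (measurableSet_singleton w)
  -- key: for k ≤ n, μ {X n = v, η = k} = π v * μ {η = k}
  have hswap : ∀ (k : ℕ) (w : S),
      μ {ω | X k ω = w ∧ η ω = k} = T.statDist w * μ {ω | η ω = k} := by
    intro k w
    have hset : {ω | X k ω = w ∧ η ω = k} = {ω | X (η ω) ω = w ∧ η ω = k} := by
      ext ω
      constructor
      · rintro ⟨h1, h2⟩; exact ⟨by rw [h2]; exact h1, h2⟩
      · rintro ⟨h1, h2⟩; exact ⟨by rw [h2] at h1; exact h1, h2⟩
    rw [hset, hSS k w]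
  have hkey : ∀ (n k : ℕ), k ≤ n →
      μ {ω | X n ω = v ∧ η ω = k} = T.statDist v * μ {ω | η ω = k} := by
    intro n k hk
    obtain ⟨j, rfl⟩ : ∃ j, n = k + j := ⟨n - k, (Nat.add_sub_cancel' hk).symm⟩
    have hpart : {ω | X (k+j) ω = v ∧ η ω = k}
        = ⋃ w ∈ (Finset.univ : Finset S), {ω | X (k+j) ω = v ∧ X k ω = w ∧ η ω = k} := by
      ext ω
      simp only [Set.mem_setOf_eq, Set.mem_iUnion, Finset.mem_univ, exists_true_left,
        exists_prop, true_and]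
      constructor
      · rintro ⟨h1, h2⟩; exact ⟨X k ω, h1, rfl, h2⟩
      · rintro ⟨w, h1, _, h2⟩; exact ⟨h1, h2⟩
    have hdisj : ((Finset.univ : Finset S) : Set S).PairwiseDisjoint
        (fun w => {ω | X (k+j) ω = v ∧ X k ω = w ∧ η ω = k}) := by
      intro a _ b _ hab
      refine Set.disjoint_left.2 ?_
      rintro ω ⟨_, ha, _⟩ ⟨_, hb, _⟩
      exact hab (ha ▸ hb ▸ rfl)
    have hmeas : ∀ w ∈ (Finset.univ : Finset S),
        MeasurableSet {ω | X (k+j) ω = v ∧ X k ω = w ∧ η ω = k} := by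
      intro w _
      exact (hXnv (k+j) v).inter ((hXnv k w).inter (hηk k))
    rw [hpart, measure_biUnion_finset hdisj hmeas]
    calc ∑ w : S, μ {ω | X (k+j) ω = v ∧ X k ω = w ∧ η ω = k}
        = ∑ w : S, (T.statDist w * (T.stepM ^ j) w v) * μ {ω | η ω = k} := by
          refine Finset.sum_congr rfl fun w _ => ?_
          rw [hSM k j w v, hswap k w]; ring
      _ = (∑ w : S, T.statDist w * (T.stepM ^ j) w v) * μ {ω | η ω = k} := by
          rw [Finset.sum_mul]
      _ = T.statDist v * μ {ω | η ω = k} := by rw [T.sum_statDist_mul_pow j v]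
  -- step 3: μ {X (m-1) = v, η < m} = π v * μ {η < m}
  have hstep3 : ∀ m : ℕ,
      μ {ω | X (m-1) ω = v ∧ η ω < m} = T.statDist v * μ {ω | η ω < m} := by
    intro m
    cases m with
    | zero => simp
    | succ n =>
      have e1 : {ω | X (n+1-1) ω = v ∧ η ω < n+1}
          = ⋃ k ∈ Finset.range (n+1), {ω | X n ω = v ∧ η ω = k} := by
        ext ω
        simp only [Nat.add_sub_cancel, Set.mem_setOf_eq, Set.mem_iUnion, Finset.mem_range,
          exists_prop]
        constructor
        · rintro ⟨h1, h2⟩; exact ⟨η ω, h2, h1, rfl⟩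
        · rintro ⟨k, hk, h1, h2⟩; exact ⟨h1, h2 ▸ hk⟩
      have e2 : {ω | η ω < n+1} = ⋃ k ∈ Finset.range (n+1), {ω | η ω = k} := by
        ext ω
        simp only [Set.mem_setOf_eq, Set.mem_iUnion, Finset.mem_range, exists_prop]
        constructor
        · intro h; exact ⟨η ω, h, rfl⟩
        · rintro ⟨k, hk, h⟩; exact h ▸ hk
      have hd1 : ((Finset.range (n+1) : Finset ℕ) : Set ℕ).PairwiseDisjoint
          (fun k => {ω | X n ω = v ∧ η ω = k}) := by
        intro a _ b _ hab
        refine Set.disjoint_left.2 ?_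
        rintro ω ⟨_, ha⟩ ⟨_, hb⟩
        exact hab (ha ▸ hb ▸ rfl)
      have hd2 : ((Finset.range (n+1) : Finset ℕ) : Set ℕ).PairwiseDisjoint (fun k => {ω | η ω = k}) := by
        intro a _ b _ hab
        refine Set.disjoint_left.2 ?_
        rintro ω ha hb
        exact hab (ha ▸ hb ▸ rfl)
      rw [e1, e2, measure_biUnion_finset hd1 (fun k _ => (hXnv n v).inter (hηk k)),
        measure_biUnion_finset hd2 (fun k _ => hηk k), Finset.mul_sum]
      exact Finset.sum_congr rfl fun k hk =>
        hkey n k (Nat.lt_succ_iff.mp (Finset.mem_range.mp hk))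
  -- independence applications
  have hs1 : ∀ m : ℕ, MeasurableSet {p : (ℕ → S) × ℕ | p.1 (m-1) = v ∧ p.2 < m} := by
    intro m
    have hm : Measurable (fun p : (ℕ → S) × ℕ => p.1 (m-1)) :=
      (measurable_pi_apply (m-1)).comp measurable_fst
    exact (hm (measurableSet_singleton v)).inter (measurable_snd measurableSet_Iio)
  have hs2 : ∀ m : ℕ, MeasurableSet {p : (ℕ → S) × ℕ | p.2 < m} := by
    intro m
    exact measurable_snd measurableSet_Iio
  have hmain : ∀ m : ℕ, μ {ω | X (m-1) ω = v ∧ η ω < m ∧ τ ω = m}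
      = (T.statDist v * μ {ω | η ω < m}) * μ {ω | τ ω = m} := by
    intro m
    have h := hindep.measure_inter_preimage_eq_mul
      {p : (ℕ → S) × ℕ | p.1 (m-1) = v ∧ p.2 < m} {m} (hs1 m) (measurableSet_singleton m)
    have e : ((fun ω => ((fun n => X n ω), η ω)) ⁻¹' {p : (ℕ → S) × ℕ | p.1 (m-1) = v ∧ p.2 < m})
        ∩ (τ ⁻¹' {m}) = {ω | X (m-1) ω = v ∧ η ω < m ∧ τ ω = m} := by
      ext ω
      simp only [Set.mem_inter_iff, Set.mem_preimage, Set.mem_setOf_eq, Set.mem_singleton_iff]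
      tauto
    have e' : ((fun ω => ((fun n => X n ω), η ω)) ⁻¹' {p : (ℕ → S) × ℕ | p.1 (m-1) = v ∧ p.2 < m})
        = {ω | X (m-1) ω = v ∧ η ω < m} := rfl
    rw [e, e'] at h
    rw [h, hstep3 m]
    rfl
  have hmainA : ∀ m : ℕ, μ {ω | η ω < m ∧ τ ω = m}
      = μ {ω | η ω < m} * μ {ω | τ ω = m} := by
    intro m
    have h := hindep.measure_inter_preimage_eq_mul
      {p : (ℕ → S) × ℕ | p.2 < m} {m} (hs2 m) (measurableSet_singleton m)
    have e : ((fun ω => ((fun n => X n ω), η ω)) ⁻¹' {p : (ℕ → S) × ℕ | p.2 < m})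
        ∩ (τ ⁻¹' {m}) = {ω | η ω < m ∧ τ ω = m} := by
      ext ω
      simp only [Set.mem_inter_iff, Set.mem_preimage, Set.mem_setOf_eq, Set.mem_singleton_iff]
    rw [e] at h
    rw [h]
    rfl
  -- decompositions over the value of τ
  have hAmeas : MeasurableSet {ω | η ω < τ ω} := measurableSet_lt hηmeas hτmeas
  have hU1 : {ω | η ω < τ ω} ∩ {ω | X (τ ω - 1) ω = v}
      = ⋃ m : ℕ, {ω | X (m-1) ω = v ∧ η ω < m ∧ τ ω = m} := by
    ext ω
    simp only [Set.mem_inter_iff, Set.mem_setOf_eq, Set.mem_iUnion]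
    constructor
    · rintro ⟨h1, h2⟩; exact ⟨τ ω, h2, h1, rfl⟩
    · rintro ⟨m, h1, h2, rfl⟩; exact ⟨h2, h1⟩
  have hU2 : {ω | η ω < τ ω} = ⋃ m : ℕ, {ω | η ω < m ∧ τ ω = m} := by
    ext ω
    simp only [Set.mem_setOf_eq, Set.mem_iUnion]
    constructor
    · intro h; exact ⟨τ ω, h, rfl⟩
    · rintro ⟨m, h, rfl⟩; exact h
  have hτm : ∀ m : ℕ, MeasurableSet {ω | τ ω = m} := fun m =>
    hτmeas (measurableSet_singleton m)
  have hd1 : Pairwise (Function.onFun Disjoint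
      (fun m => {ω | X (m-1) ω = v ∧ η ω < m ∧ τ ω = m})) := by
    intro a b hab
    refine Set.disjoint_left.2 ?_
    rintro ω ⟨_, _, ha⟩ ⟨_, _, hb⟩
    exact hab (ha ▸ hb ▸ rfl)
  have hd2 : Pairwise (Function.onFun Disjoint (fun m => {ω | η ω < m ∧ τ ω = m})) := by
    intro a b hab
    refine Set.disjoint_left.2 ?_
    rintro ω ⟨_, ha⟩ ⟨_, hb⟩
    exact hab (ha ▸ hb ▸ rfl)
  have hηltm : ∀ m : ℕ, MeasurableSet {ω | η ω < m} := fun m => hηmeas measurableSet_Iio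
  have hm1 : ∀ m : ℕ, MeasurableSet {ω | X (m-1) ω = v ∧ η ω < m ∧ τ ω = m} := fun m =>
    (hXnv (m-1) v).inter ((hηltm m).inter (hτm m))
  have hm2 : ∀ m : ℕ, MeasurableSet {ω | η ω < m ∧ τ ω = m} := fun m =>
    (hηltm m).inter (hτm m)
  have hμ1 : μ ({ω | η ω < τ ω} ∩ {ω | X (τ ω - 1) ω = v})
      = T.statDist v * μ {ω | η ω < τ ω} := by
    rw [hU1, measure_iUnion hd1 hm1]
    calc ∑' m : ℕ, μ {ω | X (m-1) ω = v ∧ η ω < m ∧ τ ω = m}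
        = ∑' m : ℕ, T.statDist v * (μ {ω | η ω < m} * μ {ω | τ ω = m}) := by
          refine tsum_congr fun m => ?_
          rw [hmain m, mul_assoc]
      _ = T.statDist v * ∑' m : ℕ, μ {ω | η ω < m} * μ {ω | τ ω = m} :=
          ENNReal.tsum_mul_left
      _ = T.statDist v * μ {ω | η ω < τ ω} := by
          rw [hU2, measure_iUnion hd2 hm2]
          exact congrArg _ (tsum_congr fun m => (hmainA m).symm)
  rw [cond_apply hAmeas μ, hμ1, mul_comm (T.statDist v), ← mul_assoc,
    ENNReal.inv_mul_cancel hpos (measure_ne_top μ _), one_mul]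
end

section
/- Let T be a finite tree-with-loop and x a vertex of T. Let (X_n)_{n≥0} be the simple random walk on T started at x (possibly carrying extra independent randomization), with stationary distribution π_T(v) = deg(v)/Σ_z deg(z), and let η be a strong stationary time for (X_n) that is almost surely finite. Let (Z_n)_{n≥1} be independent nonnegative-integer-valued random variables, independent of the pair ((X_n)_{n≥0}, η), such that P(Z_n = 0) > 0 for every n and such that τ := inf{n > 0 : Z_n ≥ 1} is almost surely finite. Then P(η < τ) > 0 and, for every vertex v of T, P(X_η = v | η < τ) = P(X_{τ−1} = v | η < τ) = π_T(v). -/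
open MeasureTheory ProbabilityTheory
open scoped ENNReal

/-! On `{η = k}`, strong stationarity and the strong Markov property make the walk
`π`-distributed at every time `a ≥ k`, because `π` is stationary for the walk (detailed balance:
`deg x * P x y` is symmetric in `x, y`). The growth time `τ` is a function of `Z`, hence
independent of `(X, η)`, so on each event `{η = k, τ = m}` with `k < m` both `X k` and `X (m - 1)`
are `π`-distributed; summing over `(k, m)` gives the two identities. Finally `P(η < τ) > 0`
since some `{η = k}` has positive mass and `τ > k` has probability at least
`∏_{1 ≤ n ≤ k} P(Z n = 0) > 0`. -/

theorem Matrix.vecMul_pow_of_vecMul_eq {n α : Type*} [Fintype n] [DecidableEq n] [CommSemiring α]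
    {M : Matrix n n α} {v : n → α} (hv : Matrix.vecMul v M = v) (j : ℕ) :
    Matrix.vecMul v (M ^ j) = v := by
  induction j with
  | zero => simp
  | succ j ih => rw [pow_succ, ← Matrix.vecMul_vecMul, ih, hv]

section Fiberwise

variable {Ω β : Type*} [MeasurableSpace Ω] [MeasurableSpace β] [MeasurableSingletonClass β]
  [Countable β] {μ : Measure Ω} {f : Ω → β}

theorem measure_eq_tsum_preimage_singleton_inter (hf : Measurable f) (s : Set Ω) :
    μ s = ∑' b, μ (f ⁻¹' {b} ∩ s) := by
  have hfib : ∀ b, MeasurableSet (f ⁻¹' {b}) := fun b => hf (measurableSet_singleton b)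
  rw [← Measure.restrict_apply_univ, ← Set.preimage_univ (f := f), ← Set.iUnion_of_singleton β,
    Set.preimage_iUnion, measure_iUnion (pairwise_disjoint_fiber f) hfib]
  simp only [Measure.restrict_apply (hfib _)]

theorem measure_eq_mul_of_forall_preimage_singleton (hf : Measurable f) {s t : Set Ω}
    {c : ℝ≥0∞} (h : ∀ b, μ (f ⁻¹' {b} ∩ s) = c * μ (f ⁻¹' {b} ∩ t)) : μ s = c * μ t := by
  rw [measure_eq_tsum_preimage_singleton_inter hf s, measure_eq_tsum_preimage_singleton_inter hf t,
    ← ENNReal.tsum_mul_left]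
  exact tsum_congr h

end Fiberwise

theorem measurable_nat_sInf {α : Type*} [MeasurableSpace α] {p : α → ℕ → Prop}
    (hp : ∀ n, MeasurableSet {a | p a n}) : Measurable fun a => sInf {n | p a n} := by
  refine measurable_to_countable' fun m => ?_
  have hfiber : (fun a => sInf {n | p a n}) ⁻¹' {m}
      = {a | (p a m ∨ (m = 0 ∧ ∀ n, ¬ p a n)) ∧ ∀ n < m, ¬ p a n} := by
    ext a
    simp only [Set.mem_preimage, Set.mem_singleton_iff, Set.mem_ofPred_eq]
    constructor
    · rintro rfl
      rcases Set.eq_empty_or_nonempty {n | p a n} with hempty | hne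
      · refine ⟨Or.inr ⟨by rw [hempty, Nat.sInf_empty], fun n hn => hempty.subset hn⟩, ?_⟩
        exact fun n hn hpn => (hempty.subset hpn).elim
      · exact ⟨Or.inl (Nat.sInf_mem hne), fun n hn => Nat.notMem_of_lt_sInf hn⟩
    · rintro ⟨hm | ⟨rfl, hnone⟩, hlt⟩
      · exact IsLeast.csInf_eq ⟨hm, fun n hn => not_lt.1 fun h => hlt n h hn⟩
      · exact Nat.sInf_eq_zero.2 (Or.inr (Set.eq_empty_iff_forall_notMem.2 hnone))
  rw [hfiber]
  measurability

section StrongStationaryTime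

variable {S Ω : Type*} [MeasurableSpace S] [MeasurableSingletonClass S]
  [MeasurableSpace Ω] {μ : Measure Ω} {X : ℕ → Ω → S} {η : Ω → ℕ}

theorem measure_state_and_time_eq_of_le [Fintype S] [DecidableEq S] {P : Matrix S S ℝ≥0∞}
    {π : S → ℝ≥0∞} (hX : ∀ n, Measurable (X n)) (hπ : Matrix.vecMul π P = π)
    (hSS : ∀ (k : ℕ) (y : S), μ {ω | X (η ω) ω = y ∧ η ω = k} = π y * μ {ω | η ω = k})
    (hSM : ∀ (k j : ℕ) (w y : S), μ {ω | X (k + j) ω = y ∧ X k ω = w ∧ η ω = k}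
      = (P ^ j) w y * μ {ω | X k ω = w ∧ η ω = k})
    {k a : ℕ} (hka : k ≤ a) (v : S) :
    μ {ω | X a ω = v ∧ η ω = k} = π v * μ {ω | η ω = k} := by
  obtain ⟨j, rfl⟩ := Nat.exists_eq_add_of_le hka
  have hstart : ∀ w, μ {ω | X k ω = w ∧ η ω = k} = π w * μ {ω | η ω = k} := fun w => by
    rw [← hSS k w]
    congr 1
    ext ω
    constructor <;> rintro ⟨h, hk⟩ <;> exact ⟨hk ▸ h, hk⟩
  calc μ {ω | X (k + j) ω = v ∧ η ω = k}
      = ∑ w, μ {ω | X (k + j) ω = v ∧ X k ω = w ∧ η ω = k} := by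
        rw [measure_eq_tsum_preimage_singleton_inter (hX k), tsum_fintype]
        refine Finset.sum_congr rfl fun w _ => congr_arg μ ?_
        ext ω
        simp only [Set.mem_inter_iff, Set.mem_preimage, Set.mem_singleton_iff, Set.mem_ofPred_eq]
        tauto
    _ = Matrix.vecMul π (P ^ j) v * μ {ω | η ω = k} := by
        simp only [hSM, hstart, Matrix.vecMul, dotProduct, Finset.sum_mul]
        exact Finset.sum_congr rfl fun w _ => by ring
    _ = π v * μ {ω | η ω = k} := by rw [Matrix.vecMul_pow_of_vecMul_eq hπ]

theorem measure_lt_inter_state_eq_mul {σ : Ω → ℕ} (hη : Measurable η) (hσ : Measurable σ)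
    (hindep : IndepFun (fun ω => ((fun n => X n ω), η ω)) σ μ) {v : S} {c : ℝ≥0∞}
    (hlater : ∀ k a, k ≤ a → μ {ω | X a ω = v ∧ η ω = k} = c * μ {ω | η ω = k})
    (t : ℕ → ℕ → ℕ) (ht : ∀ k m, k < m → k ≤ t k m) :
    μ ({ω | η ω < σ ω} ∩ {ω | X (t (η ω) (σ ω)) ω = v}) = c * μ {ω | η ω < σ ω} := by
  refine measure_eq_mul_of_forall_preimage_singleton (hη.prodMk hσ) fun ⟨k, m⟩ => ?_
  have hfiber : (fun ω => (η ω, σ ω)) ⁻¹' {(k, m)} = {ω | η ω = k} ∩ σ ⁻¹' {m} := by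
    ext ω
    simp
  by_cases hkm : k < m
  · have hmul : ∀ A : Set ((ℕ → S) × ℕ), MeasurableSet A →
        μ ((fun ω => ((fun n => X n ω), η ω)) ⁻¹' A ∩ σ ⁻¹' {m})
          = μ ((fun ω => ((fun n => X n ω), η ω)) ⁻¹' A) * μ (σ ⁻¹' {m}) := fun A hA =>
      hindep.measure_inter_preimage_eq_mul _ _ hA (measurableSet_singleton m)
    calc μ ((fun ω => (η ω, σ ω)) ⁻¹' {(k, m)}
          ∩ ({ω | η ω < σ ω} ∩ {ω | X (t (η ω) (σ ω)) ω = v}))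
        = μ ({ω | X (t k m) ω = v ∧ η ω = k} ∩ σ ⁻¹' {m}) := by
          congr 1
          ext ω
          simp only [Set.mem_inter_iff, Set.mem_preimage, Set.mem_singleton_iff, Prod.mk.injEq,
            Set.mem_ofPred_eq]
          grind
      _ = μ {ω | X (t k m) ω = v ∧ η ω = k} * μ (σ ⁻¹' {m}) :=
          hmul {p | p.1 (t k m) = v ∧ p.2 = k} (by measurability)
      _ = c * μ ({ω | η ω = k} ∩ σ ⁻¹' {m}) := by
          rw [hlater k _ (ht k m hkm), mul_assoc]
          exact congr_arg (c * ·) (hmul {p | p.2 = k} (by measurability)).symm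
      _ = c * μ ((fun ω => (η ω, σ ω)) ⁻¹' {(k, m)} ∩ {ω | η ω < σ ω}) := by
          rw [hfiber]
          congr 2
          ext ω
          simp only [Set.mem_inter_iff, Set.mem_preimage, Set.mem_singleton_iff, Set.mem_ofPred_eq]
          grind
  · have hempty : (fun ω => (η ω, σ ω)) ⁻¹' {(k, m)} ∩ {ω | η ω < σ ω} = ∅ := by
      rw [hfiber, Set.eq_empty_iff_forall_notMem]
      rintro ω ⟨⟨rfl, rfl⟩, hlt⟩
      exact hkm hlt
    rw [← Set.inter_assoc, hempty, Set.empty_inter, measure_empty, mul_zero]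

end StrongStationaryTime

theorem measure_lt_ne_zero_of_indepFun {Ω : Type*} [MeasurableSpace Ω] {μ : Measure Ω}
    [IsProbabilityMeasure μ] {η σ : Ω → ℕ} (hη : Measurable η)
    (hindep : IndepFun η σ μ) (hσ : ∀ k, μ {ω | k < σ ω} ≠ 0) : μ {ω | η ω < σ ω} ≠ 0 := by
  obtain ⟨k, hk⟩ : ∃ k, μ (η ⁻¹' {k}) ≠ 0 := by
    by_contra! h
    have := measure_eq_tsum_preimage_singleton_inter (μ := μ) hη Set.univ
    simp [h] at this
  have hsub : η ⁻¹' {k} ∩ σ ⁻¹' Set.Ioi k ⊆ {ω | η ω < σ ω} := by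
    rintro ω ⟨hk, hσk⟩
    exact lt_of_eq_of_lt hk hσk
  have hprod : μ (η ⁻¹' {k} ∩ σ ⁻¹' Set.Ioi k) = μ (η ⁻¹' {k}) * μ {ω | k < σ ω} :=
    hindep.measure_inter_preimage_eq_mul _ _ (measurableSet_singleton k) measurableSet_Ioi
  exact fun h0 => mul_ne_zero hk (hσ k) (hprod ▸ measure_mono_null hsub h0)

theorem measure_lt_sInf_growth_ne_zero {Ω : Type*} [MeasurableSpace Ω] {μ : Measure Ω}
    [IsProbabilityMeasure μ] {Z : ℕ → Ω → ℕ} (hZ : ∀ n, Measurable (Z n))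
    (hindep : iIndepFun Z μ) (hzero : ∀ n, 1 ≤ n → 0 < μ {ω | Z n ω = 0})
    (hfin : μ {ω | ∃ n, 0 < n ∧ 1 ≤ Z n ω} = 1) (k : ℕ) :
    μ {ω | k < sInf {n | 0 < n ∧ 1 ≤ Z n ω}} ≠ 0 := by
  set A := ⋂ n ∈ Finset.Icc 1 k, Z n ⁻¹' {0}
  have hA : μ A ≠ 0 := by
    rw [hindep.meas_biInter fun n _ => ⟨{0}, measurableSet_singleton 0, rfl⟩,
      Finset.prod_ne_zero_iff]
    exact fun n hn => (hzero n (Finset.mem_Icc.1 hn).1).ne'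
  have hgrowth : MeasurableSet {ω | ∃ n, 0 < n ∧ 1 ≤ Z n ω} := by measurability
  have hsub : A ∩ {ω | ∃ n, 0 < n ∧ 1 ≤ Z n ω} ⊆ {ω | k < sInf {n | 0 < n ∧ 1 ≤ Z n ω}} := by
    rintro ω ⟨hAω, hne⟩
    refine Nat.lt_of_succ_le (le_csInf hne fun n ⟨hn, hZn⟩ => ?_)
    by_contra! hnk
    have : Z n ω = 0 := Set.mem_iInter₂.1 hAω n (Finset.mem_Icc.2 ⟨hn, by omega⟩)
    omega
  rw [← measure_inter_conull ((prob_compl_eq_zero_iff hgrowth).2 hfin)] at hA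
  exact fun h0 => hA (measure_mono_null hsub h0)

namespace TreeWithLoop

variable {S : Type*} [Fintype S] [DecidableEq S] (T : TreeWithLoop S)

lemma deg_pos_s6 (v : S) : 0 < T.deg v := by
  classical
  have : Nontrivial S := Fintype.one_lt_card_iff_nontrivial.mp T.card_ge
  have := T.isTree.connected.preconnected.degree_pos_of_nontrivial v
  unfold deg
  convert Nat.lt_add_right _ this

open scoped Classical in
lemma deg_mul_stepM (x y : S) :
    T.deg x * T.stepM x y
      = (if T.g.Adj x y then 1 else 0) + (if x = y ∧ x = T.root then 1 else 0) := by
  have hdeg : ∀ z, (T.deg z : ℝ≥0∞) * (T.deg z : ℝ≥0∞)⁻¹ = 1 := fun z =>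
    ENNReal.mul_inv_cancel (by exact_mod_cast (T.deg_pos_s6 z).ne') (by simp)
  simp only [stepM, Matrix.of_apply]
  by_cases hadj : T.g.Adj x y
  · have hloop : ¬(x = y ∧ x = T.root) := fun h => hadj.ne h.1
    simp [hadj, hloop, hdeg]
  · rcases em (x = y ∧ x = T.root) with ⟨rfl, rfl⟩ | hloop
    · simp [hdeg]
    · simp [hadj, hloop]

lemma deg_mul_stepM_comm (u w : S) :
    T.deg u * T.stepM u w = T.deg w * T.stepM w u := by
  rw [deg_mul_stepM, deg_mul_stepM, T.g.adj_comm]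
  grind

lemma sum_deg_mul_stepM (v : S) : ∑ y, T.deg v * T.stepM v y = T.deg v := by
  classical
  simp only [deg_mul_stepM, Finset.sum_add_distrib, Finset.sum_boole]
  unfold deg
  push_cast
  congr 1
  · rw [← SimpleGraph.card_neighborFinset_eq_degree, SimpleGraph.neighborFinset_eq_filter]
  · by_cases hv : v = T.root
    · simp only [hv, if_true, Nat.cast_eq_one]
      exact Finset.card_eq_one.2 ⟨T.root, by ext; simp [eq_comm]⟩
    · simp [hv]

lemma vecMul_statDist_stepM : Matrix.vecMul T.statDist T.stepM = T.statDist := by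
  funext w
  simp only [Matrix.vecMul, dotProduct, statDist, div_eq_mul_inv,
    mul_right_comm _ _⁻¹ (T.stepM _ w), ← Finset.sum_mul, T.deg_mul_stepM_comm _ w,
    sum_deg_mul_stepM]

end TreeWithLoop

theorem stationary_at_first_growth_time_general
    {S : Type*} [Fintype S] [DecidableEq S] [MeasurableSpace S] [MeasurableSingletonClass S]
    {Ω : Type*} [MeasurableSpace Ω] (μ : Measure Ω) [IsProbabilityMeasure μ]
    (T : TreeWithLoop S)
    (X : ℕ → Ω → S) (hXmeas : ∀ n, Measurable (X n))
    (η : Ω → ℕ) (hηmeas : Measurable η)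
    (hSS : ∀ (k : ℕ) (y : S),
      μ {ω | X (η ω) ω = y ∧ η ω = k} = T.statDist y * μ {ω | η ω = k})
    (hSM : ∀ (k j : ℕ) (w y : S),
      μ {ω | X (k + j) ω = y ∧ X k ω = w ∧ η ω = k}
        = (T.stepM ^ j) w y * μ {ω | X k ω = w ∧ η ω = k})
    (Z : ℕ → Ω → ℕ) (hZmeas : ∀ n, Measurable (Z n))
    (hZindep : iIndepFun Z μ)
    (hZXη : IndepFun (fun ω => ((fun n => X n ω), η ω)) (fun ω => (fun n => Z n ω)) μ)
    (hZzero : ∀ n : ℕ, 1 ≤ n → 0 < μ {ω | Z n ω = 0})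
    (τ : Ω → ℕ) (hτdef : ∀ ω, τ ω = sInf {n : ℕ | 0 < n ∧ 1 ≤ Z n ω})
    (hτfin : μ {ω | ∃ n : ℕ, 0 < n ∧ 1 ≤ Z n ω} = 1)
    (v : S) :
    μ {ω | η ω < τ ω} ≠ 0 ∧
    μ[|{ω | η ω < τ ω}] {ω | X (η ω) ω = v} = T.statDist v ∧
    μ[|{ω | η ω < τ ω}] {ω | X (τ ω - 1) ω = v} = T.statDist v := by
  have hgrowth : Measurable fun z : ℕ → ℕ => sInf {n : ℕ | 0 < n ∧ 1 ≤ z n} :=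
    measurable_nat_sInf fun n => by measurability
  have hτ : τ = (fun z : ℕ → ℕ => sInf {n : ℕ | 0 < n ∧ 1 ≤ z n}) ∘ fun ω n => Z n ω :=
    funext hτdef
  have hτmeas : Measurable τ := hτ ▸ hgrowth.comp (measurable_pi_lambda _ hZmeas)
  have hindep : IndepFun (fun ω => ((fun n => X n ω), η ω)) τ μ :=
    hτ ▸ hZXη.comp measurable_id hgrowth
  have hC : μ {ω | η ω < τ ω} ≠ 0 := by
    refine measure_lt_ne_zero_of_indepFun hηmeas (hindep.comp measurable_snd measurable_id) ?_
    simpa only [hτdef] using measure_lt_sInf_growth_ne_zero hZmeas hZindep hZzero hτfin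
  have hCmeas : MeasurableSet {ω | η ω < τ ω} := measurableSet_lt hηmeas hτmeas
  have hlater := fun k a (hka : k ≤ a) =>
    measure_state_and_time_eq_of_le hXmeas T.vecMul_statDist_stepM hSS hSM hka v
  have hcond : ∀ t : ℕ → ℕ → ℕ, (∀ k m, k < m → k ≤ t k m) →
      μ[|{ω | η ω < τ ω}] {ω | X (t (η ω) (τ ω)) ω = v} = T.statDist v := fun t ht => by
    rw [cond_apply hCmeas, measure_lt_inter_state_eq_mul hηmeas hτmeas hindep hlater t ht,
      mul_comm (T.statDist v), ENNReal.inv_mul_cancel_left hC (measure_ne_top _ _)]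
  exact ⟨hC, hcond (fun k _ => k) fun _ _ _ => le_rfl,
    hcond (fun _ m => m - 1) fun _ _ => Nat.le_sub_one_of_lt⟩

/-- **Stationarity at the first growth time.**
Let `(X_n)` be the simple random walk on a finite tree-with-loop `T` started at `x` (possibly
carrying extra independent randomization), with an (a.s. finite, here `ℕ`-valued) strong
stationary time `η`.  Let `(Z_n)_{n≥1}` be independent nonnegative-integer random variables,
independent of `((X_n), η)`, with `P(Z_n = 0) > 0` for every `n ≥ 1`, and let
`τ = inf{n > 0 : Z_n ≥ 1}` be almost surely finite.  Then `P(η < τ) > 0` and, for every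
vertex `v`, `P(X_η = v ∣ η < τ) = P(X_{τ-1} = v ∣ η < τ) = π(v)`.

The walk and the strong stationary time are encoded as in the previous statement: `X 0 = x`
a.s., Markov property `hMarkov`, strong stationarity `hSS`, strong Markov property at `η`
`hSM`. -/
theorem stationary_at_first_growth_time
    {S : Type*} [Fintype S] [DecidableEq S] [MeasurableSpace S] [MeasurableSingletonClass S]
    {Ω : Type*} [MeasurableSpace Ω] (μ : Measure Ω) [IsProbabilityMeasure μ]
    (T : TreeWithLoop S) (x : S)
    (X : ℕ → Ω → S) (hXmeas : ∀ n, Measurable (X n))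
    (η : Ω → ℕ) (hηmeas : Measurable η)
    (hX0 : μ {ω | X 0 ω = x} = 1)
    (hMarkov : ∀ (n : ℕ) (path : Fin (n + 1) → S) (y : S),
      μ {ω | (∀ i : Fin (n + 1), X i.1 ω = path i) ∧ X (n + 1) ω = y}
        = T.stepM (path (Fin.last n)) y * μ {ω | ∀ i : Fin (n + 1), X i.1 ω = path i})
    (hSS : ∀ (k : ℕ) (y : S),
      μ {ω | X (η ω) ω = y ∧ η ω = k} = T.statDist y * μ {ω | η ω = k})
    (hSM : ∀ (k j : ℕ) (w y : S),
      μ {ω | X (k + j) ω = y ∧ X k ω = w ∧ η ω = k}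
        = (T.stepM ^ j) w y * μ {ω | X k ω = w ∧ η ω = k})
    (Z : ℕ → Ω → ℕ) (hZmeas : ∀ n, Measurable (Z n))
    (hZindep : iIndepFun Z μ)
    (hZXη : IndepFun (fun ω => ((fun n => X n ω), η ω)) (fun ω => (fun n => Z n ω)) μ)
    (hZzero : ∀ n : ℕ, 1 ≤ n → 0 < μ {ω | Z n ω = 0})
    (τ : Ω → ℕ) (hτdef : ∀ ω, τ ω = sInf {n : ℕ | 0 < n ∧ 1 ≤ Z n ω})
    (hτfin : μ {ω | ∃ n : ℕ, 0 < n ∧ 1 ≤ Z n ω} = 1)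
    (v : S) :
    μ {ω | η ω < τ ω} ≠ 0 ∧
    μ[|{ω | η ω < τ ω}] {ω | X (η ω) ω = v} = T.statDist v ∧
    μ[|{ω | η ω < τ ω}] {ω | X (τ ω - 1) ω = v} = T.statDist v :=
  stationary_at_first_growth_time_general μ T X hXmeas η hηmeas hSS hSM Z hZmeas hZindep hZXη hZzero
    τ hτdef hτfin v
end

section
/- Let γ ∈ (2/3, 1) and let 0 < ε < γ/(1−γ) − 2. Let (Z_k)_{k≥1} be independent random variables with P(Z_k = 1) = k^{−γ} = 1 − P(Z_k = 0), and define the growth times τ_0 = 0 and τ_k = inf{n > τ_{k−1} : Z_n = 1} for k ≥ 1, with Δτ_k = τ_{k+1} − τ_k. Then P(Δτ_i < i^{1+ε} for infinitely many i) = 0; that is, almost surely Δτ_i ≥ i^{1+ε} for all sufficiently large i. -/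
open MeasureTheory ProbabilityTheory Finset Filter

/-- The growth times of the tree builder random walk: `τ_0 = 0` and
`τ_k = inf{n > τ_{k-1} : Z_n = 1}` for `k ≥ 1` (with the convention `sInf ∅ = 0`). -/
noncomputable def growthTime {Ω : Type*} (Z : ℕ → Ω → ℕ) : ℕ → Ω → ℕ
  | 0, _ => 0
  | k + 1, ω => sInf {n : ℕ | growthTime Z k ω < n ∧ Z n ω = 1}

/-!
Fix `α` with `(2 + ε) / γ < α < 1 / (1 - γ)` and put `n_i = ⌊i ^ α⌋`. If
`Δτ_i ≤ i ^ (1 + ε)`, then either at least `i` successes occur by time `n_i`, or the `i`-th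
success occurs at some `t > n_i` and is followed by another success within `i ^ (1 + ε)` steps.
The number of successes by time `n_i` has mean and variance at most `i ^ (α (1 - γ)) / (1 - γ)`
with `α (1 - γ) < 1`, so by Chebyshev the first event has probability `O(i ^ (α (1 - γ) - 2))`.
The event `τ_i = t` depends only on `Z_1, …, Z_t`, and every success probability after time
`n_i` is at most `i ^ (-α γ)`, so the second event has probability at most
`i ^ (1 + ε - α γ)`, where `α γ > 2 + ε`. Both bounds are summable, and Borel–Cantelli
concludes. The second Borel–Cantelli lemma guarantees that almost surely there are infinitely
many successes, so that every `τ_k` is a genuine success time.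
-/

open scoped ENNReal

section SuccessTimes

variable {Ω : Type*}

def successCount (Z : ℕ → Ω → ℕ) (t : ℕ) (ω : Ω) : ℕ := #{n ∈ Ioc 0 t | Z n ω = 1}

/-- `t` is the time of the `i`-th success, i.e. `τ_i = t`. -/
def IsSuccessTime (Z : ℕ → Ω → ℕ) (i t : ℕ) (ω : Ω) : Prop :=
  successCount Z t ω = i ∧ Z t ω = 1

section Deterministic

variable {Z : ℕ → Ω → ℕ} {ω : Ω}

lemma successCount_eq_add {t t' : ℕ} (h : t ≤ t') :
    successCount Z t' ω = successCount Z t ω + #{n ∈ Ioc t t' | Z n ω = 1} := by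
  rw [successCount, successCount, ← Ioc_union_Ioc_eq_Ioc (Nat.zero_le t) h, filter_union,
    card_union_of_disjoint (disjoint_filter_filter (Ioc_disjoint_Ioc_of_le le_rfl))]

lemma successCount_mono {t t' : ℕ} (h : t ≤ t') :
    successCount Z t ω ≤ successCount Z t' ω := by
  rw [successCount_eq_add h]
  exact Nat.le_add_right _ _

lemma successCount_lt_of_lt {t t' : ℕ} (h : t < t') (h' : Z t' ω = 1) :
    successCount Z t ω < successCount Z t' ω := by
  rw [successCount_eq_add h.le, Nat.lt_add_right_iff_pos, card_pos]
  exact ⟨t', mem_filter.2 ⟨right_mem_Ioc.2 h, h'⟩⟩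

lemma IsSuccessTime.unique {i t t' : ℕ} (h : IsSuccessTime Z i t ω)
    (h' : IsSuccessTime Z i t' ω) : t = t' := by
  by_contra hne
  rcases Nat.lt_or_gt_of_ne hne with hlt | hlt
  · exact (successCount_lt_of_lt hlt h'.2).ne (h.1.trans h'.1.symm)
  · exact (successCount_lt_of_lt hlt h.2).ne (h'.1.trans h.1.symm)

lemma growthTime_succ_spec (hω : ∃ᶠ n in atTop, Z n ω = 1) (k : ℕ) :
    growthTime Z k ω < growthTime Z (k + 1) ω ∧ Z (growthTime Z (k + 1) ω) ω = 1 ∧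
      ∀ m, growthTime Z k ω < m → m < growthTime Z (k + 1) ω → Z m ω ≠ 1 := by
  have hne : {n | growthTime Z k ω < n ∧ Z n ω = 1}.Nonempty :=
    frequently_atTop'.1 hω (growthTime Z k ω)
  obtain ⟨hlt, hone⟩ := Nat.sInf_mem hne
  refine ⟨hlt, hone, fun m hkm hm hZm => ?_⟩
  have hle : growthTime Z (k + 1) ω ≤ m := Nat.sInf_le ⟨hkm, hZm⟩
  omega

lemma successCount_growthTime (hω : ∃ᶠ n in atTop, Z n ω = 1) (k : ℕ) :
    successCount Z (growthTime Z k ω) ω = k := by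
  induction k with
  | zero => simp [successCount, growthTime]
  | succ k ih =>
    obtain ⟨hlt, hone, hgap⟩ := growthTime_succ_spec hω k
    have hsingle : {n ∈ Ioc (growthTime Z k ω) (growthTime Z (k + 1) ω) | Z n ω = 1} =
        {growthTime Z (k + 1) ω} := by
      ext n
      simp only [mem_filter, mem_Ioc, mem_singleton]
      constructor
      · rintro ⟨⟨h₁, h₂⟩, h₃⟩
        by_contra hne
        exact hgap n h₁ (lt_of_le_of_ne h₂ hne) h₃
      · rintro rfl
        exact ⟨⟨hlt, le_rfl⟩, hone⟩
    rw [successCount_eq_add hlt.le, ih, hsingle, card_singleton]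

lemma isSuccessTime_growthTime (hω : ∃ᶠ n in atTop, Z n ω = 1) (k : ℕ) :
    IsSuccessTime Z (k + 1) (growthTime Z (k + 1) ω) ω :=
  ⟨successCount_growthTime hω _, (growthTime_succ_spec hω k).2.1⟩

lemma le_successCount_or_exists_of_growthTime_sub_le (hω : ∃ᶠ n in atTop, Z n ω = 1)
    {i N L : ℕ} (hL : growthTime Z (i + 1) ω - growthTime Z i ω ≤ L) :
    i ≤ successCount Z N ω ∨
      ∃ t, N < t ∧ IsSuccessTime Z i t ω ∧ ∃ j ∈ Ioc t (t + L), Z j ω = 1 := by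
  rcases le_or_gt (growthTime Z i ω) N with hle | hlt
  · left
    exact (successCount_growthTime hω i).ge.trans (successCount_mono hle)
  · right
    cases i with
    | zero => simp [growthTime] at hlt
    | succ k =>
      obtain ⟨hlt', hone', -⟩ := growthTime_succ_spec hω (k + 1)
      exact ⟨_, hlt, isSuccessTime_growthTime hω k, _, mem_Ioc.2 ⟨hlt', by omega⟩, hone'⟩

end Deterministic

section Measurability

variable {Z : ℕ → Ω → ℕ}

lemma measurable_successCount {m : MeasurableSpace Ω} {t : ℕ}
    (hZ : ∀ k ∈ Ioc 0 t, Measurable[m] (Z k)) : Measurable[m] (successCount Z t) := by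
  have : successCount Z t = fun ω => ∑ k ∈ Ioc 0 t, if Z k ω = 1 then 1 else 0 :=
    funext fun ω => card_filter _ _
  rw [this]
  exact Finset.measurable_sum _ fun k hk =>
    (measurable_from_nat (f := fun v => if v = 1 then 1 else 0)).comp (hZ k hk)

lemma measurableSet_isSuccessTime {m : MeasurableSpace Ω} {i t : ℕ}
    (hZ : ∀ k ≤ t, Measurable[m] (Z k)) : MeasurableSet[m] {ω | IsSuccessTime Z i t ω} :=
  (measurable_successCount (fun k hk => hZ k (mem_Ioc.1 hk).2) (measurableSet_singleton i)).inter
    (hZ t le_rfl (measurableSet_singleton 1))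

end Measurability

lemma indep_iSup_comap_comap_of_lt {β : Type*} [MeasurableSpace Ω] [mβ : MeasurableSpace β]
    {μ : Measure Ω} {X : ℕ → Ω → β} (hXmeas : ∀ k, Measurable (X k))
    (hXindep : iIndepFun X μ) {t j : ℕ} (h : t < j) :
    Indep (⨆ k ≤ t, mβ.comap (X k)) (mβ.comap (X j)) μ := by
  have := indep_iSup_of_disjoint (fun k => (hXmeas k).comap_le) hXindep
    (S := {k | k ≤ t}) (T := {j}) (by simpa)
  simpa using this

section Independence

variable [MeasurableSpace Ω] {μ : Measure Ω} {Z : ℕ → Ω → ℕ}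

lemma measure_isSuccessTime_inter_eq_mul (hZmeas : ∀ k, Measurable (Z k))
    (hZindep : iIndepFun Z μ) {i t j : ℕ} (h : t < j) :
    μ ({ω | IsSuccessTime Z i t ω} ∩ {ω | Z j ω = 1}) =
      μ {ω | IsSuccessTime Z i t ω} * μ {ω | Z j ω = 1} := by
  refine ((indep_iSup_comap_comap_of_lt hZmeas hZindep h).indepSet_of_measurableSet ?_
    ⟨{1}, measurableSet_singleton 1, rfl⟩).measure_inter_eq_mul
  exact measurableSet_isSuccessTime fun k hk =>
    measurable_iff_comap_le.2 (le_iSup₂ (f := fun k _ => MeasurableSpace.comap (Z k) _) k hk)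

lemma measure_isSuccessTime_and_exists_le (hZmeas : ∀ k, Measurable (Z k))
    (hZindep : iIndepFun Z μ) {i t L : ℕ} {c : ℝ≥0∞}
    (hc : ∀ j ∈ Ioc t (t + L), μ {ω | Z j ω = 1} ≤ c) :
    μ {ω | IsSuccessTime Z i t ω ∧ ∃ j ∈ Ioc t (t + L), Z j ω = 1} ≤
      L * c * μ {ω | IsSuccessTime Z i t ω} := by
  have hunion : {ω | IsSuccessTime Z i t ω ∧ ∃ j ∈ Ioc t (t + L), Z j ω = 1} =
      ⋃ j ∈ Ioc t (t + L), {ω | IsSuccessTime Z i t ω} ∩ {ω | Z j ω = 1} := by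
    ext ω
    simp
  calc μ {ω | IsSuccessTime Z i t ω ∧ ∃ j ∈ Ioc t (t + L), Z j ω = 1}
      ≤ ∑ j ∈ Ioc t (t + L), μ ({ω | IsSuccessTime Z i t ω} ∩ {ω | Z j ω = 1}) :=
        hunion ▸ measure_biUnion_finset_le _ _
    _ ≤ ∑ j ∈ Ioc t (t + L), c * μ {ω | IsSuccessTime Z i t ω} := by
        refine sum_le_sum fun j hj => ?_
        rw [measure_isSuccessTime_inter_eq_mul hZmeas hZindep (mem_Ioc.1 hj).1, mul_comm]
        gcongr
        exact hc j hj
    _ = L * c * μ {ω | IsSuccessTime Z i t ω} := by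
        simp [mul_assoc]

lemma measure_exists_isSuccessTime_and_exists_le (hZmeas : ∀ k, Measurable (Z k))
    (hZindep : iIndepFun Z μ) {i N L : ℕ} {c : ℝ≥0∞}
    (hc : ∀ j, N < j → μ {ω | Z j ω = 1} ≤ c) :
    μ {ω | ∃ t, N < t ∧ IsSuccessTime Z i t ω ∧ ∃ j ∈ Ioc t (t + L), Z j ω = 1} ≤
      L * c := by
  have := hZindep.isProbabilityMeasure
  have hdisj : Pairwise (Function.onFun Disjoint fun t => {ω | IsSuccessTime Z i t ω}) :=
    fun t t' hne => Set.disjoint_left.2 fun _ h h' => hne (h.unique h')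
  calc μ {ω | ∃ t, N < t ∧ IsSuccessTime Z i t ω ∧ ∃ j ∈ Ioc t (t + L), Z j ω = 1}
      ≤ ∑' t, μ {ω | N < t ∧ IsSuccessTime Z i t ω ∧
          ∃ j ∈ Ioc t (t + L), Z j ω = 1} := by
        rw [Set.ofPred_exists]
        exact measure_iUnion_le _
    _ ≤ ∑' t, L * c * μ {ω | IsSuccessTime Z i t ω} := by
        refine ENNReal.tsum_le_tsum fun t => ?_
        by_cases ht : N < t
        · simpa [ht] using measure_isSuccessTime_and_exists_le hZmeas hZindep
            fun j hj => hc j (ht.trans (mem_Ioc.1 hj).1)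
        · simp [ht]
    _ = L * c * μ (⋃ t, {ω | IsSuccessTime Z i t ω}) := by
        rw [ENNReal.tsum_mul_left, measure_iUnion hdisj fun t =>
          measurableSet_isSuccessTime fun k _ => hZmeas k]
    _ ≤ L * c := mul_le_of_le_one_right' prob_le_one

end Independence

section Chebyshev

variable [MeasurableSpace Ω] {μ : Measure Ω} {Z : ℕ → Ω → ℕ}

lemma measure_le_successCount_le (hZmeas : ∀ k, Measurable (Z k)) (hZindep : iIndepFun Z μ)
    {n i : ℕ} (hi : ∑ k ∈ Ioc 0 n, μ.real {ω | Z k ω = 1} < i) :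
    μ {ω | i ≤ successCount Z n ω} ≤
      ENNReal.ofReal ((∑ k ∈ Ioc 0 n, μ.real {ω | Z k ω = 1}) /
        (i - ∑ k ∈ Ioc 0 n, μ.real {ω | Z k ω = 1}) ^ 2) := by
  have := hZindep.isProbabilityMeasure
  set m := ∑ k ∈ Ioc 0 n, μ.real {ω | Z k ω = 1}
  set W : ℕ → Ω → ℝ := fun k => {ω | Z k ω = 1}.indicator 1 with hW
  have hmeas : ∀ k, MeasurableSet {ω | Z k ω = 1} := fun k =>
    hZmeas k (measurableSet_singleton 1)
  have hWLp : ∀ k, MemLp (W k) 2 μ := fun k => (memLp_const 1).indicator (hmeas k)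
  have hWindep : iIndepFun W μ :=
    hZindep.comp (fun _ => ({1} : Set ℕ).indicator 1) fun _ => measurable_from_nat
  have hmean : μ[∑ k ∈ Ioc 0 n, W k] = m := by
    simp only [Finset.sum_apply]
    rw [integral_finsetSum _ fun k _ => (hWLp k).integrable one_le_two]
    exact sum_congr rfl fun k _ => integral_indicator_one (hmeas k)
  have hvar : variance (∑ k ∈ Ioc 0 n, W k) μ ≤ m := by
    rw [IndepFun.variance_sum (fun k _ => hWLp k) fun a _ b _ hab => hWindep.indepFun hab]
    refine sum_le_sum fun k _ => (variance_le_expectation_sq (hWLp k).1).trans_eq ?_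
    rw [← integral_indicator_one (hmeas k)]
    congr 1 with ω
    by_cases h : Z k ω = 1 <;> simp [hW, h]
  have hcount : ∀ ω, (successCount Z n ω : ℝ) = (∑ k ∈ Ioc 0 n, W k) ω := fun ω => by
    simp [successCount, hW, Set.indicator_apply]
  calc μ {ω | i ≤ successCount Z n ω}
      ≤ μ {ω | i - m ≤ |(∑ k ∈ Ioc 0 n, W k) ω - μ[∑ k ∈ Ioc 0 n, W k]|} := by
        refine measure_mono fun ω (hω : i ≤ successCount Z n ω) => ?_
        have hω' : (i : ℝ) ≤ (∑ k ∈ Ioc 0 n, W k) ω := hcount ω ▸ by exact_mod_cast hω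
        show (i : ℝ) - m ≤ _
        rw [hmean]
        exact (sub_le_sub_right hω' m).trans (le_abs_self _)
    _ ≤ ENNReal.ofReal (variance (∑ k ∈ Ioc 0 n, W k) μ / (i - m) ^ 2) :=
        meas_ge_le_variance_div_sq (memLp_finsetSum' _ fun k _ => hWLp k) (sub_pos.2 hi)
    _ ≤ ENNReal.ofReal (m / (i - m) ^ 2) := by
        gcongr

end Chebyshev

section BorelCantelli

variable [MeasurableSpace Ω] {μ : Measure Ω}

lemma ae_frequently_mem_of_tsum_eq_top {β : Type*} [MeasurableSpace β] {X : ℕ → Ω → β}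
    (hXmeas : ∀ n, Measurable (X n)) (hXindep : iIndepFun X μ) {B : Set β}
    (hB : MeasurableSet B) (h : ∑' n, μ (X n ⁻¹' B) = ∞) :
    ∀ᵐ ω ∂μ, ∃ᶠ n in atTop, X n ω ∈ B := by
  have := hXindep.isProbabilityMeasure
  have hsets : iIndepSet (fun n => X n ⁻¹' B) μ :=
    (iIndepSet_iff_meas_biInter fun n => hXmeas n hB).2 fun S =>
      hXindep.measure_inter_preimage_eq_mul S fun _ _ => hB
  have hlimsup : ∀ᵐ ω ∂μ, ω ∈ limsup (fun n => X n ⁻¹' B) atTop :=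
    (ae_mem_iff_measure_eq
      (MeasurableSet.measurableSet_limsup fun n => hXmeas n hB).nullMeasurableSet).2
      ((measure_limsup_eq_one (fun n => hXmeas n hB) hsets h).trans measure_univ.symm)
  filter_upwards [hlimsup] with ω hω
  exact mem_limsup_iff_frequently_mem.1 hω

lemma ae_eventually_not_of_eventually_measure_le {p : ℕ → Ω → Prop} {f : ℕ → ℝ}
    (hf : Summable f) (h : ∀ᶠ i in atTop, μ {ω | p i ω} ≤ ENNReal.ofReal (f i)) :
    ∀ᵐ ω ∂μ, ∀ᶠ i in atTop, ¬ p i ω := by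
  obtain ⟨N, hN⟩ := eventually_atTop.1 h
  have hshift : ∀ᵐ ω ∂μ, ∀ᶠ i in atTop, ¬ p (i + N) ω :=
    measure_setOfPred_frequently_eq_zero <| ne_top_of_le_ne_top
      ((summable_nat_add_iff N).2 hf).tsum_ofReal_ne_top
      (ENNReal.tsum_le_tsum fun i => hN (i + N) (Nat.le_add_left N i))
  filter_upwards [hshift] with ω hω
  obtain ⟨a, ha⟩ := eventually_atTop.1 hω
  refine eventually_atTop.2 ⟨a + N, fun i hi => ?_⟩
  simpa [Nat.sub_add_cancel (by omega : N ≤ i)] using ha (i - N) (by omega)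

end BorelCantelli

section PowerSums

open Real

lemma one_sub_mul_rpow_neg_le_rpow_sub_rpow {γ x : ℝ} (hγ₀ : 0 ≤ γ) (hγ₁ : γ ≤ 1)
    (hx : 0 ≤ x) : (1 - γ) * (x + 1) ^ (-γ) ≤ (x + 1) ^ (1 - γ) - x ^ (1 - γ) := by
  have hx₁ : 0 < x + 1 := by linarith
  have hamgm : (x + 1) ^ γ * x ^ (1 - γ) ≤ γ * (x + 1) + (1 - γ) * x :=
    geom_mean_le_arith_mean2_weighted hγ₀ (sub_nonneg.2 hγ₁) hx₁.le hx (by ring)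
  have h₁ : (x + 1) ^ (1 - γ) = (x + 1) ^ (-γ) * (x + 1) := by
    rw [sub_eq_neg_add, rpow_add hx₁, rpow_one]
  have h₂ : x ^ (1 - γ) = (x + 1) ^ (-γ) * ((x + 1) ^ γ * x ^ (1 - γ)) := by
    rw [← mul_assoc, ← rpow_add hx₁, neg_add_cancel, rpow_zero, one_mul]
  rw [h₁, h₂]
  nlinarith [mul_le_mul_of_nonneg_left hamgm (rpow_pos_of_pos hx₁ (-γ)).le]

lemma one_sub_mul_sum_rpow_neg_le {γ : ℝ} (hγ₀ : 0 ≤ γ) (hγ₁ : γ ≤ 1) (n : ℕ) :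
    (1 - γ) * ∑ k ∈ Ioc 0 n, (k : ℝ) ^ (-γ) ≤ (n : ℝ) ^ (1 - γ) := by
  induction n with
  | zero => simp [rpow_nonneg]
  | succ n ih =>
    rw [sum_Ioc_succ_top (Nat.zero_le n), mul_add]
    have := one_sub_mul_rpow_neg_le_rpow_sub_rpow hγ₀ hγ₁ (Nat.cast_nonneg n)
    push_cast
    linarith

end PowerSums

section PowerLawSuccesses

open Real

variable [MeasurableSpace Ω] {μ : Measure Ω} {Z : ℕ → Ω → ℕ} {γ : ℝ}

lemma tsum_measure_eq_one_eq_top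
    (hZone : ∀ k : ℕ, 1 ≤ k → μ {ω | Z k ω = 1} = ENNReal.ofReal ((k : ℝ) ^ (-γ)))
    (hγ : γ ≤ 1) : ∑' n, μ {ω | Z n ω = 1} = ∞ := by
  by_contra h
  have hsum : Summable fun n : ℕ => (n : ℝ) ^ (-γ) := by
    refine (summable_nat_add_iff 1).1 <|
      ((summable_nat_add_iff 1).2 (ENNReal.summable_toReal h)).congr fun n => ?_
    rw [hZone (n + 1) (Nat.le_add_left 1 n), ENNReal.toReal_ofReal (by positivity)]
  linarith [summable_nat_rpow.1 hsum]

lemma eventually_measure_le_successCount_floor_rpow_le (hZmeas : ∀ k, Measurable (Z k))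
    (hZindep : iIndepFun Z μ)
    (hZone : ∀ k : ℕ, 1 ≤ k → μ {ω | Z k ω = 1} = ENNReal.ofReal ((k : ℝ) ^ (-γ)))
    (hγ₀ : 0 ≤ γ) (hγ₁ : γ < 1) {α : ℝ} (hα : α * (1 - γ) < 1) :
    ∀ᶠ i : ℕ in atTop, μ {ω | i ≤ successCount Z ⌊(i : ℝ) ^ α⌋₊ ω} ≤
      ENNReal.ofReal (4 / (1 - γ) * (i : ℝ) ^ (α * (1 - γ) - 2)) := by
  set β := α * (1 - γ)
  have h1γ : 0 < 1 - γ := sub_pos.2 hγ₁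
  have hmean : ∀ i : ℕ, ∑ k ∈ Ioc 0 ⌊(i : ℝ) ^ α⌋₊, μ.real {ω | Z k ω = 1} ≤
      (i : ℝ) ^ β / (1 - γ) := fun i => by
    rw [sum_congr rfl fun k hk => by
      rw [measureReal_def, hZone k (mem_Ioc.1 hk).1, ENNReal.toReal_ofReal (by positivity)],
      le_div_iff₀ h1γ, mul_comm]
    calc (1 - γ) * ∑ k ∈ Ioc 0 ⌊(i : ℝ) ^ α⌋₊, (k : ℝ) ^ (-γ)
        ≤ (⌊(i : ℝ) ^ α⌋₊ : ℝ) ^ (1 - γ) := one_sub_mul_sum_rpow_neg_le hγ₀ hγ₁.le _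
      _ ≤ ((i : ℝ) ^ α) ^ (1 - γ) := by gcongr; exact Nat.floor_le (by positivity)
      _ = (i : ℝ) ^ β := (rpow_mul (Nat.cast_nonneg i) _ _).symm
  filter_upwards [((tendsto_rpow_atTop (sub_pos.2 hα)).comp
    tendsto_natCast_atTop_atTop).eventually_ge_atTop (2 / (1 - γ)), eventually_gt_atTop 0]
    with i hi hi₀
  have hi₀' : (0 : ℝ) < i := Nat.cast_pos.2 hi₀
  have hhalf : (i : ℝ) ^ β / (1 - γ) ≤ i / 2 := by
    calc (i : ℝ) ^ β / (1 - γ) = 2 / (1 - γ) * (i : ℝ) ^ β / 2 := by ring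
      _ ≤ (i : ℝ) ^ (1 - β) * (i : ℝ) ^ β / 2 := by gcongr; exact hi
      _ = i / 2 := by rw [← rpow_add hi₀', sub_add_cancel, rpow_one]
  have hm := hmean i
  have hm₀ : 0 ≤ ∑ k ∈ Ioc 0 ⌊(i : ℝ) ^ α⌋₊, μ.real {ω | Z k ω = 1} :=
    sum_nonneg fun _ _ => measureReal_nonneg
  refine (measure_le_successCount_le hZmeas hZindep (by linarith)).trans
    (ENNReal.ofReal_le_ofReal ?_)
  calc (∑ k ∈ Ioc 0 ⌊(i : ℝ) ^ α⌋₊, μ.real {ω | Z k ω = 1}) /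
        (i - ∑ k ∈ Ioc 0 ⌊(i : ℝ) ^ α⌋₊, μ.real {ω | Z k ω = 1}) ^ 2
      ≤ (i : ℝ) ^ β / (1 - γ) / ((i : ℝ) / 2) ^ 2 := by
        gcongr
        linarith
    _ = 4 / (1 - γ) * (i : ℝ) ^ (β - 2) := by
        rw [rpow_sub hi₀', rpow_two]
        field_simp
        ring

lemma measure_exists_isSuccessTime_floor_rpow_le (hZmeas : ∀ k, Measurable (Z k))
    (hZindep : iIndepFun Z μ)
    (hZone : ∀ k : ℕ, 1 ≤ k → μ {ω | Z k ω = 1} = ENNReal.ofReal ((k : ℝ) ^ (-γ)))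
    (hγ : 0 ≤ γ) (α δ : ℝ) {i : ℕ} (hi : 0 < i) :
    μ {ω | ∃ t, ⌊(i : ℝ) ^ α⌋₊ < t ∧ IsSuccessTime Z i t ω ∧
        ∃ j ∈ Ioc t (t + ⌊(i : ℝ) ^ δ⌋₊), Z j ω = 1} ≤
      ENNReal.ofReal ((i : ℝ) ^ (δ - α * γ)) := by
  have hi₀ : (0 : ℝ) < i := Nat.cast_pos.2 hi
  refine (measure_exists_isSuccessTime_and_exists_le hZmeas hZindep
    (c := ENNReal.ofReal ((i : ℝ) ^ (-(α * γ)))) fun j hj => ?_).trans ?_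
  · rw [hZone j (by omega)]
    refine ENNReal.ofReal_le_ofReal ?_
    calc (j : ℝ) ^ (-γ) ≤ ((i : ℝ) ^ α) ^ (-γ) :=
          rpow_le_rpow_of_nonpos (by positivity) (Nat.lt_of_floor_lt hj).le (neg_nonpos.2 hγ)
      _ = (i : ℝ) ^ (-(α * γ)) := by rw [← rpow_mul hi₀.le, mul_neg]
  · rw [← ENNReal.ofReal_natCast, ← ENNReal.ofReal_mul (Nat.cast_nonneg _)]
    refine ENNReal.ofReal_le_ofReal ?_
    calc (⌊(i : ℝ) ^ δ⌋₊ : ℝ) * (i : ℝ) ^ (-(α * γ))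
        ≤ (i : ℝ) ^ δ * (i : ℝ) ^ (-(α * γ)) := by
          gcongr
          exact Nat.floor_le (by positivity)
      _ = (i : ℝ) ^ (δ - α * γ) := by rw [← rpow_add hi₀, sub_eq_add_neg]

end PowerLawSuccesses

end SuccessTimes

theorem growth_increment_eventually_large_general
    {Ω : Type*} [MeasurableSpace Ω] (μ : Measure Ω)
    (γ ε : ℝ) (hγ₁ : 2 / 3 < γ) (hγ₂ : γ < 1)
    (hε₂ : ε < γ / (1 - γ) - 2)
    (Z : ℕ → Ω → ℕ) (hZmeas : ∀ k, Measurable (Z k))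
    (hZindep : iIndepFun Z μ)
    (hZone : ∀ k : ℕ, 1 ≤ k → μ {ω | Z k ω = 1} = ENNReal.ofReal ((k : ℝ) ^ (-γ))) :
    μ {ω | ∃ᶠ i in atTop,
        ((growthTime Z (i + 1) ω - growthTime Z i ω : ℕ) : ℝ) < (i : ℝ) ^ (1 + ε)} = 0 := by
  have hγ : 0 < γ := by linarith
  have h1γ : 0 < 1 - γ := by linarith
  obtain ⟨α, hαγ, hα⟩ : ∃ α, (2 + ε) / γ < α ∧ α < 1 / (1 - γ) := exists_between <| by
    rw [div_lt_div_iff₀ hγ h1γ, one_mul, ← lt_div_iff₀ h1γ]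
    linarith
  rw [div_lt_iff₀ hγ] at hαγ
  rw [lt_div_iff₀ h1γ] at hα
  have hinf : ∀ᵐ ω ∂μ, ∃ᶠ n in atTop, Z n ω = 1 :=
    ae_frequently_mem_of_tsum_eq_top hZmeas hZindep (measurableSet_singleton 1)
      (tsum_measure_eq_one_eq_top hZone hγ₂.le)
  have hlate := ae_eventually_not_of_eventually_measure_le
    ((Real.summable_nat_rpow.2 (by linarith)).mul_left _)
    (eventually_measure_le_successCount_floor_rpow_le hZmeas hZindep hZone hγ.le hγ₂ hα)
  have hslow := ae_eventually_not_of_eventually_measure_le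
    (Real.summable_nat_rpow.2 (by linarith)) ((eventually_gt_atTop 0).mono fun i hi =>
      measure_exists_isSuccessTime_floor_rpow_le hZmeas hZindep hZone hγ.le α (1 + ε) hi)
  filter_upwards [hinf, hlate, hslow] with ω hω hlateω hslowω
  filter_upwards [hlateω, hslowω] with i hlatei hslowi hi
  rcases le_successCount_or_exists_of_growthTime_sub_le hω (Nat.le_floor hi.le) with h | h
  exacts [hlatei h, hslowi h]

/-- **Growth events do not occur too early (Borel–Cantelli consequence).**
Let `γ ∈ (2/3, 1)` and `0 < ε < γ/(1-γ) - 2`.  Let `(Z_k)_{k≥1}` be independent with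
`P(Z_k = 1) = k^{-γ} = 1 - P(Z_k = 0)` and let `τ_k` be the growth times, `Δτ_k = τ_{k+1} - τ_k`.
Then `P(Δτ_i < i^{1+ε} for infinitely many i) = 0`. -/
theorem growth_increment_eventually_large
    {Ω : Type*} [MeasurableSpace Ω] (μ : Measure Ω) [IsProbabilityMeasure μ]
    (γ ε : ℝ) (hγ₁ : 2 / 3 < γ) (hγ₂ : γ < 1)
    (hε₁ : 0 < ε) (hε₂ : ε < γ / (1 - γ) - 2)
    (Z : ℕ → Ω → ℕ) (hZmeas : ∀ k, Measurable (Z k))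
    (hZindep : iIndepFun Z μ)
    (hZone : ∀ k : ℕ, 1 ≤ k → μ {ω | Z k ω = 1} = ENNReal.ofReal ((k : ℝ) ^ (-γ)))
    (hZzero : ∀ k : ℕ, 1 ≤ k → μ {ω | Z k ω = 0} = ENNReal.ofReal (1 - (k : ℝ) ^ (-γ))) :
    μ {ω | ∃ᶠ i in atTop,
        ((growthTime Z (i + 1) ω - growthTime Z i ω : ℕ) : ℝ) < (i : ℝ) ^ (1 + ε)} = 0 :=
  growth_increment_eventually_large_general μ γ ε hγ₁ hγ₂ hε₂ Z hZmeas hZindep hZone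
end
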